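/- arXiv:1612.08855 — 5 statements merged into one kernel-verified Lean document; each statement's English description precedes it below -/
import Mathlib

section
/- Let (Γ, α) be a voltage digraph with group ℤ_k and polynomial matrix B(z), whose (u,v) entry is Σ_{i∈ℤ_k} α_i z^i with α_i the number of arcs uv with voltage i. Then for every ℓ ≥ 0, if (B(z)^ℓ)_{uv} = β_0 + β_1 z + ⋯ + β_{k−1} z^{k−1} (computed in ℂ[z]/(z^k − 1)), then β_i equals the number of walks of length ℓ in the lift Γ^α from (u,h) to (v, h+i), for every h ∈ ℤ_k. -/
/-!
Applying the left regular representation of `G` entrywise turns a `V × V` matrix over `R[G]`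
into a `(V × G) × (V × G)` matrix over `R`. This is a ring homomorphism, and it sends the
polynomial matrix `B(z)` of a voltage digraph to the adjacency matrix of its lift. Hence it sends
`B(z) ^ ℓ` to the `ℓ`-th power of the adjacency matrix, which counts walks of length `ℓ` in the
lift.
-/

open Finset Matrix

section VoltageLift

variable {V G R : Type*} [Fintype V] [DecidableEq V] [Fintype G] [DecidableEq G] [AddGroup G]
  [Semiring R]

def voltageLift : Matrix V V (AddMonoidAlgebra R G) →+* Matrix (V × G) (V × G) R where
  toFun B := of fun p q => (B p.1 q.1).coeff (-p.2 + q.2)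
  map_zero' := rfl
  map_add' _ _ := rfl
  map_one' := by
    ext ⟨u, g⟩ ⟨v, h⟩
    by_cases huv : u = v <;>
      simp [huv, one_apply, AddMonoidAlgebra.one_def, Finsupp.single_apply, eq_neg_add_iff_add_eq]
  map_mul' A B := by
    ext ⟨u, g⟩ ⟨w, g'⟩
    simp only [of_apply, mul_apply, Fintype.sum_prod_type, AddMonoidAlgebra.coeff_sum,
      Finsupp.finsetSum_apply]
    refine sum_congr rfl fun v _ => ?_
    rw [AddMonoidAlgebra.coeff_mul_apply_left, Finsupp.sum_fintype _ _ (by simp)]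
    exact Fintype.sum_equiv (Equiv.addLeft g) _ _ fun a => by simp [add_assoc]

@[simp]
theorem voltageLift_apply (B : Matrix V V (AddMonoidAlgebra R G)) (p q : V × G) :
    voltageLift B p q = (B p.1 q.1).coeff (-p.2 + q.2) := rfl

end VoltageLift

section VoltageDigraph

variable {V E G : Type*} [Fintype E] [DecidableEq V] [AddGroup G] [DecidableEq G]

noncomputable def voltageMatrix (src tgt : E → V) (α : E → G) :
    Matrix V V (AddMonoidAlgebra ℕ G) :=
  of fun u v => ∑ e with src e = u ∧ tgt e = v, AddMonoidAlgebra.single (α e) 1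

def liftAdjMatrix (src tgt : E → V) (α : E → G) : Matrix (V × G) (V × G) ℕ :=
  of fun p q => #{e | src e = p.1 ∧ tgt e = q.1 ∧ q.2 = p.2 + α e}

theorem voltageLift_voltageMatrix [Fintype V] [Fintype G] (src tgt : E → V) (α : E → G) :
    voltageLift (voltageMatrix src tgt α) = liftAdjMatrix src tgt α := by
  ext ⟨u, g⟩ ⟨v, h⟩
  simp [voltageMatrix, liftAdjMatrix, Finsupp.single_apply, eq_neg_add_iff_add_eq, filter_filter,
    and_assoc, eq_comm]

end VoltageDigraph

/-- Walks in a cyclic lift via powers of the polynomial matrix: if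
`(B(z)^ℓ)_{uv} = β₀ + β₁ z + ⋯ + β_{k-1} z^{k-1}` (computed in `ℕ[z]/(z^k - 1)`, i.e. in
the monoid algebra of `ZMod k`), then `βᵢ` is the number of walks of length `ℓ` in the
lift `Γ^α` from `(u,h)` to `(v,h+i)`, for every `h`. -/
theorem stmt_6 {V E : Type*} [Fintype V] [Fintype E] [DecidableEq V] (k : ℕ) [NeZero k]
    (src tgt : E → V) (α : E → ZMod k)
    (Bpoly : Matrix V V (AddMonoidAlgebra ℕ (ZMod k)))
    (hB : ∀ u v : V, Bpoly u v = ∑ e ∈ univ.filter (fun e : E => src e = u ∧ tgt e = v),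
        AddMonoidAlgebra.single (α e) 1)
    (liftAdj : Matrix (V × ZMod k) (V × ZMod k) ℕ)
    (hlift : ∀ p q : V × ZMod k, liftAdj p q =
      (univ.filter (fun e : E => src e = p.1 ∧ tgt e = q.1 ∧ q.2 = p.2 + α e)).card) :
    ∀ (ℓ : ℕ) (u v : V) (h i : ZMod k),
      ((Bpoly ^ ℓ) u v).coeff i = (liftAdj ^ ℓ) (u, h) (v, h + i) := by
  intro ℓ u v h i
  obtain rfl : Bpoly = voltageMatrix src tgt α := ext hB
  obtain rfl : liftAdj = liftAdjMatrix src tgt α := ext hlift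
  rw [← voltageLift_voltageMatrix, ← map_pow, voltageLift_apply, neg_add_cancel_left]
end

section
/- Let (Γ, α) be a voltage digraph on r vertices with voltages in ℤ_k and polynomial matrix B(z). Let ω_0, …, ω_{k−1} be the distinct k-th roots of unity. Then the spectrum (multiset of eigenvalues with multiplicity) of the lift Γ^α is the union over j = 0, …, k−1 of the spectra of the complex r×r matrices B(ω_j). -/
open Finset Matrix
open Polynomial Kronecker

lemma aux_charpoly_similar {n : Type*} [Fintype n] [DecidableEq n]
    {R : Type*} [CommRing R] (P Q M : Matrix n n R) (hPQ : P * Q = 1) (hQP : Q * P = 1) :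
    (Q * M * P).charpoly = M.charpoly := by
  have hscalar : Matrix.scalar n (X : R[X]) = (X : R[X]) • (1 : Matrix n n R[X]) := by
    simp [Matrix.scalar]
    exact (smul_one_eq_diagonal _).symm
  have key : charmatrix (Q * M * P) =
      Q.map (C : R →+* R[X]) * charmatrix M * P.map (C : R →+* R[X]) := by
    rw [charmatrix, charmatrix]
    simp only [RingHom.mapMatrix_apply, Matrix.map_mul, hscalar]
    rw [Matrix.mul_sub, Matrix.sub_mul, Matrix.mul_smul, mul_one, Matrix.smul_mul]
    congr 2
    rw [← Matrix.map_mul, hQP, Matrix.map_one _ (map_zero C) (map_one C)]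
  have h1 : ((Q.map (C : R →+* R[X])).det) * ((P.map (C : R →+* R[X])).det) = 1 := by
    rw [mul_comm, ← det_mul, ← Matrix.map_mul, hPQ, Matrix.map_one _ (map_zero C) (map_one C),
      det_one]
  rw [Matrix.charpoly, key, det_mul, det_mul, Matrix.charpoly]
  calc (Q.map (C : R →+* R[X])).det * (charmatrix M).det * (P.map (C : R →+* R[X])).det
      = (charmatrix M).det * ((Q.map (C : R →+* R[X])).det * (P.map (C : R →+* R[X])).det) := by
        ring
    _ = (charmatrix M).det := by rw [h1, mul_one]

lemma aux_charpoly_blockDiagonal {n o : Type*} [Fintype n] [DecidableEq n] [Fintype o] [DecidableEq o]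
    {R : Type*} [CommRing R] (M : o → Matrix n n R) :
    (blockDiagonal M).charpoly = ∏ i : o, (M i).charpoly := by
  have key : charmatrix (blockDiagonal M) = blockDiagonal fun i => charmatrix (M i) := by
    ext ⟨u, a⟩ ⟨v, b⟩
    by_cases hab : a = b
    · subst hab
      by_cases huv : u = v <;>
        simp [charmatrix_apply, blockDiagonal_apply, diagonal_apply, huv, Prod.ext_iff]
    · simp [charmatrix_apply, blockDiagonal_apply, diagonal_apply, hab, Prod.ext_iff]
  rw [Matrix.charpoly, key, det_blockDiagonal]
  rfl


/-- The spectrum (multiset of eigenvalues, with multiplicity) of a `ℤ_k`-lift `Γ^α` of a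
base digraph is the union over the `k`-th roots of unity `ω_j` of the spectra of the
evaluated polynomial matrices `B(ω_j)`. -/
theorem stmt_8 {V E : Type*} [Fintype V] [Fintype E] [DecidableEq V] (k : ℕ) [NeZero k]
    (src tgt : E → V) (α : E → ZMod k)
    (Bz : ℂ → Matrix V V ℂ)
    (hBz : ∀ (z : ℂ) (u v : V), Bz z u v =
      ∑ e ∈ univ.filter (fun e : E => src e = u ∧ tgt e = v), z ^ (α e).val)
    (liftAdj : Matrix (V × ZMod k) (V × ZMod k) ℂ)
    (hlift : ∀ p q : V × ZMod k, liftAdj p q =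
      ((univ.filter (fun e : E => src e = p.1 ∧ tgt e = q.1 ∧ q.2 = p.2 + α e)).card : ℂ)) :
    liftAdj.charpoly.roots
      = ∑ j ∈ Finset.range k,
          (Bz (Complex.exp (2 * Real.pi * Complex.I * j / k))).charpoly.roots := by
  classical
  have hk : k ≠ 0 := NeZero.ne k
  set ζ : ℂ := Complex.exp (2 * Real.pi * Complex.I / k) with hζdef
  have hprim : IsPrimitiveRoot ζ k := Complex.isPrimitiveRoot_exp k hk
  have hζk : ζ ^ k = 1 := hprim.pow_eq_one
  have hζpow : ∀ m : ℕ, ζ ^ m = ζ ^ (m % k) := by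
    intro m
    conv_lhs => rw [← Nat.mod_add_div m k]
    rw [pow_add, pow_mul, hζk, one_pow, mul_one]
  have hcong : ∀ m m' : ℕ, m % k = m' % k → ζ ^ m = ζ ^ m' := fun m m' h => by
    rw [hζpow m, hζpow m', h]
  set F : Matrix (V × ZMod k) (V × ZMod k) ℂ :=
    Matrix.of (fun p q => if p.1 = q.1 then ζ ^ (p.2.val * q.2.val) else 0) with hFdef
  set D : Matrix (V × ZMod k) (V × ZMod k) ℂ :=
    blockDiagonal (fun j : ZMod k => Bz (ζ ^ j.val)) with hDdef
  -- the intertwining relation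
  have hFD : liftAdj * F = F * D := by
    ext ⟨u, a⟩ ⟨v, j⟩
    rw [Matrix.mul_apply, Matrix.mul_apply]
    have hL : ∑ x : V × ZMod k, liftAdj (u, a) x * F x (v, j)
        = ∑ b : ZMod k, liftAdj (u, a) (v, b) * ζ ^ (b.val * j.val) := by
      rw [Fintype.sum_prod_type, Finset.sum_comm]
      simp [hFdef, mul_ite, mul_zero]
    have hR : ∑ x : V × ZMod k, F (u, a) x * D x (v, j)
        = ζ ^ (a.val * j.val) * Bz (ζ ^ j.val) u v := by
      rw [Fintype.sum_prod_type]
      simp [hFdef, hDdef, blockDiagonal_apply, ite_mul, zero_mul, mul_ite, mul_zero]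
    rw [hL, hR]
    calc ∑ b : ZMod k, liftAdj (u, a) (v, b) * ζ ^ (b.val * j.val)
        = ∑ b : ZMod k, ∑ e : E,
            if src e = u ∧ tgt e = v ∧ b = a + α e then ζ ^ (b.val * j.val) else 0 := by
          refine Finset.sum_congr rfl fun b _ => ?_
          rw [hlift, ← Finset.sum_filter, Finset.sum_const, nsmul_eq_mul]
      _ = ∑ e : E, if src e = u ∧ tgt e = v
            then ζ ^ ((a + α e).val * j.val) else 0 := by
          rw [Finset.sum_comm]
          refine Finset.sum_congr rfl fun e _ => ?_
          by_cases hAB : src e = u ∧ tgt e = v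
          · simp [hAB.1, hAB.2]
          · have : ∀ b : ZMod k, ¬(src e = u ∧ tgt e = v ∧ b = a + α e) := by
              intro b hb; exact hAB ⟨hb.1, hb.2.1⟩
            simp [this, hAB]
      _ = ζ ^ (a.val * j.val) * Bz (ζ ^ j.val) u v := by
          rw [hBz, Finset.mul_sum, ← Finset.sum_filter]
          refine Finset.sum_congr rfl fun e _ => ?_
          rw [← pow_mul, ← pow_add]
          apply hcong
          calc ((a + α e).val * j.val) % k
              = ((a.val + (α e).val) % k * j.val) % k := by rw [ZMod.val_add]
            _ = ((a.val + (α e).val) * j.val) % k := (Nat.mod_modEq _ k).mul_right _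
            _ = (a.val * j.val + j.val * (α e).val) % k := by
                rw [add_mul, mul_comm ((α e).val) j.val]
    -- end calc
  -- invertibility of F
  set W : Matrix (ZMod k) (ZMod k) ℂ := Matrix.of (fun a b => ζ ^ (a.val * b.val)) with hWdef
  let eqv : Fin k ≃ ZMod k :=
    { toFun := fun i => ((i : ℕ) : ZMod k)
      invFun := fun a => ⟨a.val, ZMod.val_lt a⟩
      left_inv := fun i => Fin.ext (ZMod.val_natCast_of_lt i.isLt)
      right_inv := fun a => ZMod.natCast_rightInverse a }
  have heqv : ∀ a : ZMod k, ((eqv.symm a : Fin k) : ℕ) = a.val := fun a => rfl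
  have hW : W = (Matrix.reindex eqv eqv) (Matrix.vandermonde fun i : Fin k => ζ ^ (i : ℕ)) := by
    ext a b
    simp only [hWdef, Matrix.of_apply, reindex_apply, submatrix_apply, Matrix.vandermonde_apply,
      heqv, ← pow_mul]
  have hdetW : W.det ≠ 0 := by
    rw [hW, Matrix.det_reindex_self]
    rw [Ne, Matrix.det_vandermonde_eq_zero_iff]
    rintro ⟨i, j, hij, hne⟩
    exact hne (Fin.ext (hprim.pow_inj i.isLt j.isLt hij))
  have hFkron : F = (1 : Matrix V V ℂ) ⊗ₖ W := by
    ext ⟨u, a⟩ ⟨v, b⟩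
    simp [hFdef, hWdef, Matrix.kroneckerMap_apply, Matrix.one_apply, ite_mul, zero_mul]
  have hdetF : IsUnit F.det := by
    rw [hFkron, Matrix.det_kronecker, det_one, one_pow, one_mul]
    exact isUnit_iff_ne_zero.mpr (pow_ne_zero _ hdetW)
  have hlift_eq : liftAdj = F * D * F⁻¹ := by
    have h1 : F * F⁻¹ = 1 := Matrix.mul_nonsing_inv F hdetF
    calc liftAdj = liftAdj * (F * F⁻¹) := by rw [h1, mul_one]
      _ = liftAdj * F * F⁻¹ := by rw [mul_assoc]
      _ = F * D * F⁻¹ := by rw [hFD]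
  have hchar : liftAdj.charpoly = D.charpoly := by
    rw [hlift_eq]
    exact aux_charpoly_similar F⁻¹ F D (Matrix.nonsing_inv_mul F hdetF)
      (Matrix.mul_nonsing_inv F hdetF)
  rw [hchar, hDdef, aux_charpoly_blockDiagonal]
  rw [Polynomial.roots_prod _ _ (by
    rw [Finset.prod_ne_zero_iff]
    exact fun j _ => (Matrix.charpoly_monic _).ne_zero)]
  have hbind : (Finset.univ.val.bind fun j : ZMod k => (Bz (ζ ^ j.val)).charpoly.roots)
      = ∑ j : ZMod k, (Bz (ζ ^ j.val)).charpoly.roots := rfl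
  rw [hbind]
  rw [← Equiv.sum_comp eqv (fun j : ZMod k => (Bz (ζ ^ j.val)).charpoly.roots)]
  rw [← Fin.sum_univ_eq_sum_range
    (fun j : ℕ => (Bz (Complex.exp (2 * Real.pi * Complex.I * j / k))).charpoly.roots) k]
  refine Finset.sum_congr rfl fun i _ => ?_
  have hval : ((eqv i : ZMod k)).val = (i : ℕ) := ZMod.val_natCast_of_lt i.isLt
  rw [hval]
  congr 2
  rw [hζdef, ← Complex.exp_nat_mul]
  ring_nf
end

section
/- If x = (x_u) is an eigenvector of B(ω) with eigenvalue λ, where ω is a k-th root of unity, then the vector φ defined on V × ℤ_k by φ_{(u,i)} = ω^i x_u is an eigenvector of the adjacency matrix of the lift Γ^α with the same eigenvalue λ. -/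
open Finset Matrix

/-- If `x` is an eigenvector of `B(ω)` with eigenvalue `lam`, where `ω^k = 1`, then
`φ (u,i) = ω^i * x u` is an eigenvector of the adjacency matrix of the lift `Γ^α` with
the same eigenvalue `lam`. -/
theorem stmt_9 {V E : Type*} [Fintype V] [Fintype E] [DecidableEq V] (k : ℕ) [NeZero k]
    (src tgt : E → V) (α : E → ZMod k)
    (Bz : ℂ → Matrix V V ℂ)
    (hBz : ∀ (z : ℂ) (u v : V), Bz z u v =
      ∑ e ∈ univ.filter (fun e : E => src e = u ∧ tgt e = v), z ^ (α e).val)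
    (liftAdj : Matrix (V × ZMod k) (V × ZMod k) ℂ)
    (hlift : ∀ p q : V × ZMod k, liftAdj p q =
      ((univ.filter (fun e : E => src e = p.1 ∧ tgt e = q.1 ∧ q.2 = p.2 + α e)).card : ℂ))
    (ω : ℂ) (hω : ω ^ k = 1)
    (x : V → ℂ) (hx : x ≠ 0) (lam : ℂ) (hev : (Bz ω).mulVec x = lam • x)
    (φ : V × ZMod k → ℂ) (hφ : ∀ (u : V) (i : ZMod k), φ (u, i) = ω ^ i.val * x u) :
    liftAdj.mulVec φ = lam • φ ∧ φ ≠ 0 := by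
  have key : ∀ (i : ZMod k) (e : E), ω ^ ((i + α e).val) = ω ^ i.val * ω ^ (α e).val := by
    intro i e
    rw [← pow_add, ZMod.val_add, ← pow_eq_pow_mod _ hω]
  constructor
  · funext p
    obtain ⟨u, i⟩ := p
    have hL : liftAdj.mulVec φ (u, i)
        = ∑ v, ∑ j : ZMod k, ∑ e : E,
            (if src e = u ∧ tgt e = v ∧ j = i + α e then ω ^ j.val * x v else 0) := by
      simp only [Matrix.mulVec, dotProduct, Fintype.sum_prod_type]
      refine Finset.sum_congr rfl fun v _ => Finset.sum_congr rfl fun j _ => ?_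
      rw [hlift, hφ, Finset.card_filter, Nat.cast_sum, Finset.sum_mul]
      refine Finset.sum_congr rfl fun e _ => ?_
      split <;> simp
    have hL2 : liftAdj.mulVec φ (u, i)
        = ∑ v, ∑ e ∈ univ.filter (fun e : E => src e = u ∧ tgt e = v),
            ω ^ ((i + α e).val) * x v := by
      rw [hL]
      refine Finset.sum_congr rfl fun v _ => ?_
      rw [Finset.sum_comm, Finset.sum_filter]
      refine Finset.sum_congr rfl fun e _ => ?_
      by_cases h : src e = u ∧ tgt e = v
      · simp only [h, true_and, if_true]
        rw [Finset.sum_ite_eq' univ (i + α e) (fun j => ω ^ j.val * x v)]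
        simp
      · rw [if_neg h]
        apply Finset.sum_eq_zero
        intro j _
        rw [if_neg]
        rintro ⟨h1, h2, -⟩
        exact h ⟨h1, h2⟩
    rw [hL2]
    have : ∀ v, ∑ e ∈ univ.filter (fun e : E => src e = u ∧ tgt e = v),
        ω ^ ((i + α e).val) * x v = ω ^ i.val * (Bz ω u v * x v) := by
      intro v
      rw [hBz, Finset.sum_mul, Finset.mul_sum]
      refine Finset.sum_congr rfl fun e _ => ?_
      rw [key]; ring
    simp only [this, ← Finset.mul_sum]
    have hx' : ∑ v, Bz ω u v * x v = lam * x u := by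
      have := congrFun hev u
      simpa [Matrix.mulVec, dotProduct] using this
    rw [hx', Pi.smul_apply, hφ, smul_eq_mul]
    ring
  · intro h
    obtain ⟨u, hu⟩ := Function.ne_iff.mp hx
    apply hu
    have := congrFun h (u, 0)
    rw [hφ] at this
    simpa using this
end

section
/- For any ℓ ≥ 0, the trace of the ℓ-th power of the adjacency matrix A of the lift Γ^α (voltages in ℤ_k) satisfies tr(A^ℓ) = Σ_{j=0}^{k−1} tr(B(ω_j)^ℓ), where ω_j are the k-th roots of unity. -/
open Finset Matrix

section aux

variable {k : ℕ} [NeZero k]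

lemma pow_val_mod' {k : ℕ} {ω : ℂ} (hω : ω ^ k = 1) (m : ℕ) : ω ^ m = ω ^ (m % k) := by
  conv_lhs => rw [← Nat.div_add_mod m k]
  rw [pow_add, pow_mul, hω, one_pow, one_mul]

lemma chi_add {ω : ℂ} (hω : ω ^ k = 1) (a b : ZMod k) :
    ω ^ (a + b).val = ω ^ a.val * ω ^ b.val := by
  rw [← pow_add, pow_val_mod' hω (a + b).val, pow_val_mod' hω (a.val + b.val), ZMod.val_add,
    Nat.mod_mod_of_dvd _ dvd_rfl]

lemma sum_omega (c : ZMod k) :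
    ∑ j ∈ Finset.range k, Complex.exp (2 * Real.pi * Complex.I * j / k) ^ c.val
      = if c = 0 then (k : ℂ) else 0 := by
  have hterm : ∀ j : ℕ, Complex.exp (2 * Real.pi * Complex.I * j / k) ^ c.val
      = (Complex.exp (2 * Real.pi * Complex.I / k) ^ c.val) ^ j := by
    intro j
    rw [← Complex.exp_nat_mul, ← Complex.exp_nat_mul, ← Complex.exp_nat_mul]
    congr 1
    ring
  simp only [hterm]
  set x : ℂ := Complex.exp (2 * Real.pi * Complex.I / k) ^ c.val with hx
  have hprim : IsPrimitiveRoot (Complex.exp (2 * Real.pi * Complex.I / k)) k :=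
    Complex.isPrimitiveRoot_exp k (NeZero.ne k)
  by_cases hc : c = 0
  · subst hc
    simp [hx, ZMod.val_zero]
  · rw [if_neg hc]
    have hxk : x ^ k = 1 := by
      rw [hx, ← pow_mul, mul_comm c.val k, pow_mul, hprim.pow_eq_one, one_pow]
    have hx1 : x ≠ 1 := by
      intro h
      rw [hx, hprim.pow_eq_one_iff_dvd] at h
      have hlt : c.val < k := ZMod.val_lt c
      have hpos : 0 < c.val := Nat.pos_of_ne_zero (fun h0 => hc ((ZMod.val_eq_zero c).mp h0))
      exact absurd (Nat.le_of_dvd hpos h) (not_le.mpr hlt)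
    rw [geom_sum_eq hx1, hxk, sub_self, zero_div]

end aux

/-- For every `ℓ ≥ 0`, the trace of the `ℓ`-th power of the adjacency matrix of the
`ℤ_k`-lift `Γ^α` equals `∑_j tr(B(ω_j)^ℓ)`, summed over the `k`-th roots of unity. -/
theorem stmt_10 {V E : Type*} [Fintype V] [Fintype E] [DecidableEq V] (k : ℕ) [NeZero k]
    (src tgt : E → V) (α : E → ZMod k)
    (Bz : ℂ → Matrix V V ℂ)
    (hBz : ∀ (z : ℂ) (u v : V), Bz z u v =
      ∑ e ∈ univ.filter (fun e : E => src e = u ∧ tgt e = v), z ^ (α e).val)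
    (liftAdj : Matrix (V × ZMod k) (V × ZMod k) ℂ)
    (hlift : ∀ p q : V × ZMod k, liftAdj p q =
      ((univ.filter (fun e : E => src e = p.1 ∧ tgt e = q.1 ∧ q.2 = p.2 + α e)).card : ℂ)) :
    ∀ ℓ : ℕ, (liftAdj ^ ℓ).trace
      = ∑ j ∈ Finset.range k,
          ((Bz (Complex.exp (2 * Real.pi * Complex.I * j / k))) ^ ℓ).trace := by
  intro ℓ
  set ω : ℕ → ℂ := fun j => Complex.exp (2 * Real.pi * Complex.I * j / k) with hωdef
  have hk : (k : ℂ) ≠ 0 := Nat.cast_ne_zero.mpr (NeZero.ne k)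
  have hωk : ∀ j : ℕ, ω j ^ k = 1 := by
    intro j
    have hrfl : ω j = Complex.exp (2 * Real.pi * Complex.I * j / k) := rfl
    rw [hrfl, ← Complex.exp_nat_mul]
    have : (k : ℂ) * (2 * Real.pi * Complex.I * j / k) = j * (2 * Real.pi * Complex.I) := by
      field_simp
    rw [this, Complex.exp_nat_mul, Complex.exp_two_pi_mul_I, one_pow]
  set U : ℕ → Matrix (V × ZMod k) V ℂ :=
    fun j => Matrix.of fun p u => if p.1 = u then ω j ^ p.2.val else 0 with hU
  set W : ℕ → Matrix V (V × ZMod k) ℂ :=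
    fun j => Matrix.of fun u p => if u = p.1 then ω j ^ (-p.2).val / k else 0 with hW
  -- intertwining relation
  have hUB : ∀ j, liftAdj * U j = U j * Bz (ω j) := by
    intro j
    ext p u
    rw [Matrix.mul_apply, Matrix.mul_apply]
    rw [Fintype.sum_prod_type]
    simp only [hU, Matrix.of_apply]
    calc ∑ w : V, ∑ b : ZMod k, liftAdj p (w, b) * (if w = u then ω j ^ b.val else 0)
        = ∑ b : ZMod k, liftAdj p (u, b) * ω j ^ b.val := by
          rw [Finset.sum_comm]
          congr 1; ext b
          simp [mul_ite, mul_zero, Finset.sum_ite_eq, Finset.sum_ite_eq']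
      _ = ∑ b : ZMod k, ∑ e ∈ univ.filter
            (fun e : E => src e = p.1 ∧ tgt e = u ∧ b = p.2 + α e), ω j ^ b.val := by
          congr 1; ext b
          rw [hlift, Finset.sum_const, nsmul_eq_mul]
      _ = ∑ b : ZMod k, ∑ e : E, if src e = p.1 ∧ tgt e = u ∧ b = p.2 + α e
            then ω j ^ b.val else 0 := by
          congr 1; ext b
          rw [Finset.sum_filter]
      _ = ∑ e : E, ∑ b : ZMod k, if src e = p.1 ∧ tgt e = u ∧ b = p.2 + α e
            then ω j ^ b.val else 0 := Finset.sum_comm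
      _ = ∑ e : E, if src e = p.1 ∧ tgt e = u then ω j ^ p.2.val * ω j ^ (α e).val else 0 := by
          congr 1; ext e
          by_cases h : src e = p.1 ∧ tgt e = u
          · have hcond : ∀ b : ZMod k,
                (if src e = p.1 ∧ tgt e = u ∧ b = p.2 + α e then ω j ^ b.val else 0)
                  = if b = p.2 + α e then ω j ^ b.val else 0 := by
              intro b
              by_cases hb : b = p.2 + α e <;> simp [hb, h.1, h.2]
            rw [if_pos h]
            simp only [hcond]
            rw [Finset.sum_ite_eq' univ (p.2 + α e) (fun b => ω j ^ b.val),
              if_pos (Finset.mem_univ _), chi_add (hωk j)]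
          · rw [if_neg h]
            apply Finset.sum_eq_zero
            intro b _
            rw [if_neg]
            tauto
      _ = ∑ w : V, (if p.1 = w then ω j ^ p.2.val else 0) * Bz (ω j) w u := by
          simp only [ite_mul, zero_mul]
          rw [Finset.sum_ite_eq univ p.1 (fun w => ω j ^ p.2.val * Bz (ω j) w u),
            if_pos (Finset.mem_univ _), hBz, Finset.mul_sum, Finset.sum_filter]
  -- resolution of identity
  have hUW : ∑ j ∈ Finset.range k, U j * W j = 1 := by
    ext p q
    simp only [Matrix.sum_apply, Matrix.mul_apply, hU, hW, Matrix.of_apply]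
    calc ∑ j ∈ Finset.range k, ∑ u : V,
          (if p.1 = u then ω j ^ p.2.val else 0) * (if u = q.1 then ω j ^ (-q.2).val / k else 0)
        = ∑ j ∈ Finset.range k, (if p.1 = q.1 then ω j ^ (p.2 - q.2).val / k else 0) := by
          congr 1; ext j
          rw [Finset.sum_eq_single p.1]
          · by_cases h : p.1 = q.1
            · rw [if_pos rfl, if_pos h, if_pos h, sub_eq_add_neg, chi_add (hωk j)]
              ring
            · rw [if_neg h, if_neg h, mul_zero]
          · intro u _ hu
            rw [if_neg (fun hh => hu hh.symm), zero_mul]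
          · simp
      _ = if p = q then 1 else 0 := by
          by_cases h : p.1 = q.1
          · simp only [if_pos h]
            rw [← Finset.sum_div, sum_omega (p.2 - q.2)]
            by_cases h2 : p.2 = q.2
            · rw [if_pos (by rw [h2, sub_self]), if_pos (Prod.ext h h2), div_self hk]
            · rw [if_neg (fun hh => h2 (sub_eq_zero.mp hh)), zero_div,
                if_neg (fun hh => h2 (congrArg Prod.snd hh))]
          · simp only [if_neg h, Finset.sum_const_zero]
            rw [if_neg (fun hh : p = q => h (congrArg Prod.fst hh))]
      _ = (1 : Matrix (V × ZMod k) (V × ZMod k) ℂ) p q := (Matrix.one_apply).symm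
  have hWU : ∀ j, W j * U j = (1 : Matrix V V ℂ) := by
    intro j
    ext u w
    rw [Matrix.mul_apply, Fintype.sum_prod_type]
    simp only [hU, hW, Matrix.of_apply]
    calc ∑ x : V, ∑ a : ZMod k,
          (if u = x then ω j ^ (-a).val / k else 0) * (if x = w then ω j ^ a.val else 0)
        = ∑ x : V, ∑ a : ZMod k,
            (if u = x ∧ x = w then ω j ^ (-a).val / k * ω j ^ a.val else 0) := by
          congr 1; ext x; congr 1; ext a
          by_cases h1 : u = x <;> by_cases h2 : x = w <;> simp [h1, h2]
      _ = ∑ x : V, ∑ _a : ZMod k, (if u = x ∧ x = w then (k : ℂ)⁻¹ else 0) := by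
          congr 1; ext x; congr 1; ext a
          congr 1
          rw [div_mul_eq_mul_div, ← chi_add (hωk j), neg_add_cancel, ZMod.val_zero, pow_zero,
            one_div]
      _ = ∑ x : V, (k : ℂ) * (if u = x ∧ x = w then (k : ℂ)⁻¹ else 0) := by
          congr 1; ext x
          rw [Finset.sum_const, Finset.card_univ, ZMod.card, nsmul_eq_mul]
      _ = (1 : Matrix V V ℂ) u w := by
          rw [Matrix.one_apply]
          by_cases h : u = w
          · subst h
            rw [Finset.sum_eq_single u, if_pos ⟨rfl, rfl⟩, mul_inv_cancel₀ hk, if_pos rfl]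
            · intro x _ hx
              rw [if_neg (fun hh => hx hh.2), mul_zero]
            · simp
          · rw [if_neg h]
            apply Finset.sum_eq_zero
            intro x _
            rw [if_neg (fun hh => h (hh.1.trans hh.2)), mul_zero]
  have hpow : ∀ j, ∀ n : ℕ, liftAdj ^ n * U j = U j * (Bz (ω j)) ^ n := by
    intro j n
    induction n with
    | zero => simp
    | succ n ih =>
      rw [pow_succ, pow_succ, Matrix.mul_assoc, hUB j, ← Matrix.mul_assoc, ih, Matrix.mul_assoc]
  calc (liftAdj ^ ℓ).trace
      = (liftAdj ^ ℓ * (∑ j ∈ Finset.range k, U j * W j)).trace := by rw [hUW, mul_one]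
    _ = ∑ j ∈ Finset.range k, (liftAdj ^ ℓ * (U j * W j)).trace := by
        rw [Finset.mul_sum, Matrix.trace_sum]
    _ = ∑ j ∈ Finset.range k, ((Bz (ω j)) ^ ℓ).trace := by
        apply Finset.sum_congr rfl
        intro j _
        rw [← Matrix.mul_assoc, hpow j ℓ, Matrix.trace_mul_comm, ← Matrix.mul_assoc, hWU j, one_mul]
    _ = ∑ j ∈ Finset.range k,
          ((Bz (Complex.exp (2 * Real.pi * Complex.I * j / k))) ^ ℓ).trace := rfl
end

section
/- For the generalized Petersen graph P(n,k), corresponding to p₁(z) = z + z⁻¹ and p₂(z) = z^k + z^{−k}, the eigenvalues are ½[ 2cos(2πj/n) + 2cos(2πjk/n) ± √((2cos(2πj/n) − 2cos(2πjk/n))² + 4) ] for j = 0, …, n−1, giving all 2n eigenvalues. -/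
/-!
The adjacency matrix of a `ℤ_n`-lift is block-circulant, so conjugating by the discrete Fourier
matrix `(ψ (g * h))_{g,h}` of the standard character `ψ` block-diagonalises it into the `2 × 2`
blocks `B(ψ h)`, `h ∈ ℤ_n`. For `P(n,k)` the block at `h = j` is
`[[2 cos(2πj/n), 1], [1, 2 cos(2πjk/n)]]`, whose characteristic polynomial
`X² - (c₁ + c₂) X + c₁ c₂ - 1` has the two roots `(c₁ + c₂ ± √((c₁ - c₂)² + 4)) / 2`.
-/

open Finset Matrix Polynomial Kronecker

namespace Matrix

variable {m o R : Type*} [Fintype m] [DecidableEq m] [Fintype o] [DecidableEq o] [CommRing R]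

theorem charmatrix_blockDiagonal (d : o → Matrix m m R) :
    charmatrix (blockDiagonal d) = blockDiagonal fun g => charmatrix (d g) := by
  ext ⟨i, g⟩ ⟨j, h⟩
  by_cases hgh : g = h
  · subst hgh
    by_cases hij : i = j <;> simp [blockDiagonal_apply, *]
  · simp [blockDiagonal_apply, hgh]

theorem charpoly_blockDiagonal (d : o → Matrix m m R) :
    (blockDiagonal d).charpoly = ∏ g, (d g).charpoly := by
  rw [charpoly, charmatrix_blockDiagonal, det_blockDiagonal]
  rfl

theorem charpoly_eq_of_mul_eq_mul {A D U V : Matrix m m R} (hVU : V * U = 1)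
    (hAU : A * U = U * D) : A.charpoly = D.charpoly := by
  have hUV : U * V = 1 := mul_eq_one_comm.mp hVU
  calc A.charpoly = (A * U * V).charpoly := by rw [mul_assoc, hUV, mul_one]
    _ = (V * (U * D)).charpoly := by rw [charpoly_mul_comm, hAU]
    _ = D.charpoly := by rw [← mul_assoc, hVU, one_mul]

theorem charpoly_fin_two_eq_mul [Nontrivial R] (M : Matrix (Fin 2) (Fin 2) R) {u v : R}
    (hsum : u + v = M.trace) (hprod : u * v = M.det) : M.charpoly = (X - C u) * (X - C v) := by
  rw [charpoly_fin_two, ← hsum, ← hprod, C_add, C_mul]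
  ring

end Matrix

theorem Polynomial.roots_prod_mul_X_sub_C {R ι : Type*} [CommRing R] [IsDomain R]
    (s : Finset ι) (u v : ι → R) :
    (∏ i ∈ s, (X - C (u i)) * (X - C (v i))).roots = ∑ i ∈ s, ({u i, v i} : Multiset R) := by
  have hfactor : ∀ i, (X - C (u i)) * (X - C (v i)) ≠ 0 := fun i =>
    mul_ne_zero (X_sub_C_ne_zero _) (X_sub_C_ne_zero _)
  rw [roots_prod _ _ (prod_ne_zero_iff.mpr fun i _ => hfactor i)]
  refine Multiset.bind_congr fun i _ => ?_
  rw [roots_mul (hfactor i), roots_X_sub_C, roots_X_sub_C]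
  rfl

theorem ZMod.prod_univ_eq_prod_range {M : Type*} [CommMonoid M] (n : ℕ) [NeZero n]
    (f : ZMod n → M) :
    ∏ g, f g = ∏ j ∈ range n, f j :=
  prod_nbij' ZMod.val Nat.cast (fun g _ => mem_range.mpr (ZMod.val_lt g)) (fun _ _ => mem_univ _)
    (fun g _ => ZMod.natCast_zmod_val g) (fun _ hj => ZMod.val_cast_of_lt (mem_range.mp hj))
    (fun g _ => by rw [ZMod.natCast_zmod_val])

section Fourier

variable {m R 𝕜 : Type*} [Fintype m] [DecidableEq m] [CommRing R] [Fintype R] [DecidableEq R]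
  [Field 𝕜]

def dftMatrix (ψ : AddChar R 𝕜) : Matrix R R 𝕜 := of fun g h => ψ (g * h)

theorem dftMatrix_inv_mul_dftMatrix {ψ : AddChar R 𝕜} (hψ : ψ.IsPrimitive) :
    dftMatrix ψ⁻¹ * dftMatrix ψ = (Fintype.card R : 𝕜) • 1 := by
  ext g h
  have hterm : ∀ a, ψ⁻¹ (g * a) * ψ (a * h) = ψ (a * (h - g)) := fun a => by
    rw [AddChar.inv_apply, ← AddChar.map_add_eq_mul]; ring_nf
  simp only [dftMatrix, mul_apply, of_apply, hterm, AddChar.sum_mulShift _ hψ, sub_eq_zero,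
    Matrix.smul_apply, one_apply, smul_eq_mul, mul_ite, mul_one, mul_zero, eq_comm, Nat.cast_ite,
    Nat.cast_zero]

/-- The `R`-lift of a base graph on `m` with voltages in `R`: `A p q s` is the coefficient of
`z ^ s` in the entry `B(z) p q` of the base matrix, and `liftSymbol A ψ h` is `B(ψ h)`. -/
def liftMatrix (A : m → m → R → 𝕜) : Matrix (m × R) (m × R) 𝕜 :=
  of fun i j => A i.1 j.1 (j.2 - i.2)

def liftSymbol (A : m → m → R → 𝕜) (ψ : AddChar R 𝕜) (h : R) : Matrix m m 𝕜 :=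
  of fun p q => ∑ s, A p q s * ψ (s * h)

theorem liftMatrix_mul_kronecker_dftMatrix (A : m → m → R → 𝕜) (ψ : AddChar R 𝕜) :
    liftMatrix A * (1 ⊗ₖ dftMatrix ψ) = (1 ⊗ₖ dftMatrix ψ) * blockDiagonal (liftSymbol A ψ) := by
  ext ⟨p, g⟩ ⟨q, h⟩
  simp only [liftMatrix, dftMatrix, liftSymbol, mul_apply, of_apply, kroneckerMap_apply, one_apply,
    blockDiagonal_apply, ite_mul, one_mul, zero_mul, mul_ite, mul_zero, Fintype.sum_prod_type,
    sum_ite_irrel, sum_const_zero, sum_ite_eq, sum_ite_eq', mem_univ, ↓reduceIte]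
  rw [← Equiv.sum_comp (Equiv.addRight g), mul_sum]
  refine sum_congr rfl fun s _ => ?_
  rw [Equiv.coe_addRight, add_sub_cancel_right, add_mul, AddChar.map_add_eq_mul]
  ring

theorem charpoly_liftMatrix (A : m → m → R → 𝕜) {ψ : AddChar R 𝕜} (hψ : ψ.IsPrimitive)
    (hR : (Fintype.card R : 𝕜) ≠ 0) :
    (liftMatrix A).charpoly = ∏ h, (liftSymbol A ψ h).charpoly := by
  rw [← charpoly_blockDiagonal]
  refine charpoly_eq_of_mul_eq_mul (V := 1 ⊗ₖ ((Fintype.card R : 𝕜)⁻¹ • dftMatrix ψ⁻¹)) ?_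
    (liftMatrix_mul_kronecker_dftMatrix A ψ)
  rw [← mul_kronecker_mul, one_mul, smul_mul_assoc, dftMatrix_inv_mul_dftMatrix hψ, smul_smul,
    inv_mul_cancel₀ hR, one_smul, one_kronecker_one]

end Fourier

open Real in
theorem ZMod.stdAddChar_natCast_add_neg {n : ℕ} [NeZero n] (j : ℕ) :
    stdAddChar (j : ZMod n) + stdAddChar (-(j : ZMod n)) =
      ((2 * cos (2 * π * j / n) : ℝ) : ℂ) := by
  rw [← Int.cast_natCast, ← Int.cast_neg, stdAddChar_coe, stdAddChar_coe]
  push_cast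
  rw [Complex.cos]
  ring_nf

theorem charpoly_fin_two_offDiag_one (a b : ℝ) :
    !![(a : ℂ), 1; 1, (b : ℂ)].charpoly =
      (X - C (((a + b + √((a - b) ^ 2 + 4)) / 2 : ℝ) : ℂ)) *
        (X - C (((a + b - √((a - b) ^ 2 + 4)) / 2 : ℝ) : ℂ)) := by
  have hsq : √((a - b) ^ 2 + 4) ^ 2 = (a - b) ^ 2 + 4 := Real.sq_sqrt (by positivity)
  apply charpoly_fin_two_eq_mul
  · rw [trace_fin_two_of]; push_cast; ring
  · rw [det_fin_two_of, mul_one]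
    have : (a + b + √((a - b) ^ 2 + 4)) / 2 * ((a + b - √((a - b) ^ 2 + 4)) / 2) = a * b - 1 := by
      nlinarith [hsq]
    exact_mod_cast congrArg (fun x : ℝ => (x : ℂ)) this

def petersenVoltages (n k : ℕ) : Fin 2 → Fin 2 → ZMod n → ℂ :=
  ![![fun s => (if s = 1 then 1 else 0) + (if s = -1 then 1 else 0),
      fun s => if s = 0 then 1 else 0],
    ![fun s => if s = 0 then 1 else 0,
      fun s => (if s = k then 1 else 0) + (if s = -k then 1 else 0)]]

theorem eq_liftMatrix_petersenVoltages {n k : ℕ}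
    {M : Matrix (Fin 2 × ZMod n) (Fin 2 × ZMod n) ℂ}
    (hM00 : ∀ g h : ZMod n, M (0, g) (0, h) =
      (if h = g + 1 then 1 else 0) + (if h = g - 1 then 1 else 0))
    (hM11 : ∀ g h : ZMod n, M (1, g) (1, h) =
      (if h = g + (k : ZMod n) then 1 else 0) + (if h = g - (k : ZMod n) then 1 else 0))
    (hM01 : ∀ g h : ZMod n, M (0, g) (1, h) = if h = g then 1 else 0)
    (hM10 : ∀ g h : ZMod n, M (1, g) (0, h) = if h = g then 1 else 0) :
    M = liftMatrix (petersenVoltages n k) := by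
  ext ⟨p, g⟩ ⟨q, h⟩
  fin_cases p <;> fin_cases q <;>
    simp [liftMatrix, petersenVoltages, hM00, hM01, hM10, hM11, sub_eq_iff_eq_add',
      ← sub_eq_add_neg]

theorem liftSymbol_petersenVoltages (n k : ℕ) [NeZero n] (ψ : AddChar (ZMod n) ℂ) (h : ZMod n) :
    liftSymbol (petersenVoltages n k) ψ h = !![ψ h + ψ (-h), 1; 1, ψ (k * h) + ψ (-(k * h))] := by
  ext p q
  fin_cases p <;> fin_cases q <;>
    simp [liftSymbol, petersenVoltages, sum_add_distrib, add_mul, ite_mul]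

open Real in
theorem charpoly_liftSymbol_petersenVoltages (n k : ℕ) [NeZero n] (j : ℕ) :
    (liftSymbol (petersenVoltages n k) ZMod.stdAddChar (j : ZMod n)).charpoly =
      (X - C (((2 * cos (2 * π * j / n) + 2 * cos (2 * π * j * k / n) +
        √((2 * cos (2 * π * j / n) - 2 * cos (2 * π * j * k / n)) ^ 2 + 4)) / 2 : ℝ) : ℂ)) *
      (X - C (((2 * cos (2 * π * j / n) + 2 * cos (2 * π * j * k / n) -
        √((2 * cos (2 * π * j / n) - 2 * cos (2 * π * j * k / n)) ^ 2 + 4)) / 2 : ℝ) : ℂ)) := by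
  have hjk : (2 * π * j * k / n : ℝ) = 2 * π * (j * k : ℕ) / n := by push_cast; ring
  rw [liftSymbol_petersenVoltages, ← Nat.cast_mul, mul_comm k, ZMod.stdAddChar_natCast_add_neg,
    ZMod.stdAddChar_natCast_add_neg, ← hjk, charpoly_fin_two_offDiag_one]

/-- The eigenvalues of the generalized Petersen graph `P(n,k)`, viewed as the `ℤ_n`-lift
of the two-vertex base graph with `B(z) = [[z + z⁻¹, 1], [1, z^k + z^{-k}]]`, are
`½ [2cos(2πj/n) + 2cos(2πjk/n) ± √((2cos(2πj/n) - 2cos(2πjk/n))² + 4)]`,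
for `j = 0, …, n-1`, giving all `2n` eigenvalues. -/
theorem stmt_18 (n : ℕ) [NeZero n] (k : ℕ)
    (M : Matrix (Fin 2 × ZMod n) (Fin 2 × ZMod n) ℂ)
    (hM00 : ∀ g h : ZMod n, M (0, g) (0, h) =
      (if h = g + 1 then 1 else 0) + (if h = g - 1 then 1 else 0))
    (hM11 : ∀ g h : ZMod n, M (1, g) (1, h) =
      (if h = g + (k : ZMod n) then 1 else 0) + (if h = g - (k : ZMod n) then 1 else 0))
    (hM01 : ∀ g h : ZMod n, M (0, g) (1, h) = if h = g then 1 else 0)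
    (hM10 : ∀ g h : ZMod n, M (1, g) (0, h) = if h = g then 1 else 0) :
    M.charpoly.roots
      = ∑ j ∈ Finset.range n,
          (let c1 : ℝ := 2 * Real.cos (2 * Real.pi * j / n)
           let c2 : ℝ := 2 * Real.cos (2 * Real.pi * j * k / n)
           ({(((c1 + c2 + Real.sqrt ((c1 - c2) ^ 2 + 4)) / 2 : ℝ) : ℂ),
             (((c1 + c2 - Real.sqrt ((c1 - c2) ^ 2 + 4)) / 2 : ℝ) : ℂ)} : Multiset ℂ)) := by
  have hcard : (Fintype.card (ZMod n) : ℂ) ≠ 0 := by simp [ZMod.card, NeZero.ne n]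
  rw [eq_liftMatrix_petersenVoltages hM00 hM11 hM01 hM10,
    charpoly_liftMatrix _ (ZMod.isPrimitive_stdAddChar n) hcard, ZMod.prod_univ_eq_prod_range]
  simp_rw [charpoly_liftSymbol_petersenVoltages]
  exact roots_prod_mul_X_sub_C _ _ _
end
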